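/- Fix coprime positive integers d₁, d₂ and consider the commutative graded ℚ-algebra R generated by elements α of degree 2/d₁ and β of degree 2/d₂ subject to the relations α^{d₁} = β^{d₂} and α^{d₁+1} = β^{d₂+1} = 0. Then R has a ℚ-basis {1, α, α², ..., α^{d₁-1}, β, β², ..., β^{d₂-1}, α^{d₁}}, of dimension d₁ + d₂. -/

import Mathlib

/-!
The quotient is spanned by the images of pure powers of `x` and `y`: mixed monomials are
multiples of `xy`, `x ^ (d₁ + 1)` is a relation, `y ^ (d₂ + 1) = y (y ^ d₂ - x ^ d₁) + x ^ (d₁ - 1) (x y)` lies in the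
ideal, and `x ^ d₁ ≡ y ^ d₂`. For independence, consider the coefficients of `x ^ i` (`i < d₁`), of
`y ^ j` (`0 < j < d₂`) and the sum of the coefficients of `x ^ d₁` and `y ^ d₂`. Their common kernel
is stable under multiplication by `x` and `y` and contains the three relations, so it contains the
ideal; and they send the proposed basis to the standard basis of `ℚ ^ (d₁ + d₂)`.
-/

/-- The ideal (x^{d₁} - y^{d₂}, x·y, x^{d₁+1}) defining the orbifold cohomology ring of
the weighted projective line CP(d₁,d₂). -/
noncomputable def wpIdeal (d₁ d₂ : ℕ) : Ideal (MvPolynomial (Fin 2) ℚ) :=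
  Ideal.span {MvPolynomial.X 0 ^ d₁ - MvPolynomial.X 1 ^ d₂,
    MvPolynomial.X 0 * MvPolynomial.X 1, MvPolynomial.X 0 ^ (d₁ + 1)}

open MvPolynomial

namespace MvPolynomial

variable {R σ : Type*} [CommSemiring R]

theorem coeff_X_mul_of_apply_eq_zero {m : σ →₀ ℕ} {i : σ} (hm : m i = 0)
    (p : MvPolynomial σ R) : coeff m (X i * p) = 0 := by
  classical
  rw [coeff_X_mul', if_neg (Finsupp.notMem_support_iff.mpr hm)]

theorem coeff_single_succ_X_mul (i : σ) (n : ℕ) (p : MvPolynomial σ R) :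
    coeff (Finsupp.single i (n + 1)) (X i * p) = coeff (Finsupp.single i n) p := by
  rw [add_comm, Finsupp.single_add, coeff_X_mul]

theorem mul_mem_of_forall_X_mul_mem {N : Submodule R (MvPolynomial σ R)}
    (hN : ∀ i, ∀ p ∈ N, X i * p ∈ N) (q : MvPolynomial σ R) : ∀ p ∈ N, q * p ∈ N := by
  induction q using MvPolynomial.induction_on with
  | C c => intro p hp; rw [C_mul']; exact N.smul_mem c hp
  | add q r hq hr => intro p hp; rw [add_mul]; exact N.add_mem (hq p hp) (hr p hp)
  | mul_X q i hq => intro p hp; rw [mul_assoc]; exact hq _ (hN i p hp)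

theorem span_subset_of_forall_X_mul_mem {N : Submodule R (MvPolynomial σ R)}
    {s : Set (MvPolynomial σ R)} (hs : s ⊆ N) (hN : ∀ i, ∀ p ∈ N, X i * p ∈ N) :
    (Ideal.span s : Set (MvPolynomial σ R)) ⊆ N :=
  Ideal.span_le (I := { N with smul_mem' := mul_mem_of_forall_X_mul_mem hN }) |>.mpr hs

end MvPolynomial

section

variable {d₁ d₂ : ℕ}

noncomputable def wpBasisPoly (d₁ d₂ : ℕ) : Fin d₁ ⊕ Fin d₂ → MvPolynomial (Fin 2) ℚ :=
  Sum.elim (fun i => X 0 ^ (i : ℕ)) fun j => X 1 ^ ((j : ℕ) + 1)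

theorem X_zero_pow_mem_wpIdeal {i : ℕ} (hi : d₁ < i) : X 0 ^ i ∈ wpIdeal d₁ d₂ := by
  obtain ⟨n, rfl⟩ := Nat.exists_eq_add_of_lt hi
  rw [show (X 0 ^ (d₁ + n + 1) : MvPolynomial (Fin 2) ℚ) = X 0 ^ n * X 0 ^ (d₁ + 1) by ring]
  exact Ideal.mul_mem_left _ _ (Ideal.subset_span (by simp))

theorem X_one_pow_mem_wpIdeal (h₁ : 0 < d₁) {j : ℕ} (hj : d₂ < j) : X 1 ^ j ∈ wpIdeal d₁ d₂ := by
  obtain ⟨n, rfl⟩ := Nat.exists_eq_add_of_lt hj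
  obtain ⟨m, rfl⟩ : ∃ m, d₁ = m + 1 := ⟨d₁ - 1, by omega⟩
  rw [show (X 1 ^ (d₂ + n + 1) : MvPolynomial (Fin 2) ℚ) =
      -X 1 ^ (n + 1) * (X 0 ^ (m + 1) - X 1 ^ d₂) + X 0 ^ m * X 1 ^ n * (X 0 * X 1) by ring]
  exact Ideal.add_mem _ (Ideal.mul_mem_left _ _ (Ideal.subset_span (by simp)))
    (Ideal.mul_mem_left _ _ (Ideal.subset_span (by simp)))

theorem X_zero_pow_mul_X_one_pow_mem_wpIdeal {i j : ℕ} (hi : 0 < i) (hj : 0 < j) :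
    X 0 ^ i * X 1 ^ j ∈ wpIdeal d₁ d₂ := by
  obtain ⟨m, rfl⟩ := Nat.exists_eq_add_of_lt hi
  obtain ⟨n, rfl⟩ := Nat.exists_eq_add_of_lt hj
  rw [show (X 0 ^ (0 + m + 1) * X 1 ^ (0 + n + 1) : MvPolynomial (Fin 2) ℚ) =
      X 0 ^ m * X 1 ^ n * (X 0 * X 1) by ring]
  exact Ideal.mul_mem_left _ _ (Ideal.subset_span (by simp))

theorem mk_X_zero_pow_eq_mk_X_one_pow :
    Ideal.Quotient.mk (wpIdeal d₁ d₂) (X 0 ^ d₁) = Ideal.Quotient.mk (wpIdeal d₁ d₂) (X 1 ^ d₂) :=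
  Ideal.Quotient.eq.mpr (Ideal.subset_span (by simp))

theorem top_le_span_range_mk_wpBasisPoly (h₁ : 0 < d₁) :
    ⊤ ≤ Submodule.span ℚ (Set.range (Ideal.Quotient.mk (wpIdeal d₁ d₂) ∘ wpBasisPoly d₁ d₂)) := by
  set S := Submodule.span ℚ (Set.range (Ideal.Quotient.mk (wpIdeal d₁ d₂) ∘ wpBasisPoly d₁ d₂))
  have hbasis (k) : Ideal.Quotient.mk _ (wpBasisPoly d₁ d₂ k) ∈ S := Submodule.subset_span ⟨k, rfl⟩
  have hzero {p} (hp : p ∈ wpIdeal d₁ d₂) : Ideal.Quotient.mk _ p ∈ S := by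
    rw [Ideal.Quotient.eq_zero_iff_mem.mpr hp]
    exact S.zero_mem
  have hy (j : ℕ) : Ideal.Quotient.mk _ (X 1 ^ j) ∈ S := by
    rcases Nat.lt_or_ge d₂ j with hj | hj
    · exact hzero (X_one_pow_mem_wpIdeal h₁ hj)
    rcases j with _ | j
    · simpa [wpBasisPoly] using hbasis (.inl ⟨0, h₁⟩)
    · exact hbasis (.inr ⟨j, hj⟩)
  have hx (i : ℕ) : Ideal.Quotient.mk _ (X 0 ^ i) ∈ S := by
    rcases lt_trichotomy i d₁ with hi | rfl | hi
    · exact hbasis (.inl ⟨i, hi⟩)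
    · rw [mk_X_zero_pow_eq_mk_X_one_pow]
      exact hy d₂
    · exact hzero (X_zero_pow_mem_wpIdeal hi)
  rintro r -
  obtain ⟨p, rfl⟩ := Ideal.Quotient.mk_surjective r
  induction p using MvPolynomial.induction_on' with
  | add p q hp hq => rw [map_add]; exact S.add_mem hp hq
  | monomial m c =>
    rw [monomial_fin_two, mul_assoc, C_mul', ← Ideal.Quotient.mkₐ_eq_mk ℚ, map_smul,
      Ideal.Quotient.mkₐ_eq_mk]
    refine S.smul_mem c ?_
    rcases (m 0).eq_zero_or_pos with h0 | h0
    · simpa [h0] using hy (m 1)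
    rcases (m 1).eq_zero_or_pos with h1 | h1
    · simpa [h1] using hx (m 0)
    exact hzero (X_zero_pow_mul_X_one_pow_mem_wpIdeal h0 h1)

/-- The coefficient of `x ^ d₁` is added to that of `y ^ d₂`, since `x ^ d₁ ≡ y ^ d₂`. -/
noncomputable def wpCoords (d₁ d₂ : ℕ) :
    MvPolynomial (Fin 2) ℚ →ₗ[ℚ] (Fin d₁ ⊕ Fin d₂ → ℚ) :=
  LinearMap.pi fun
    | .inl i => lcoeff ℚ (Finsupp.single 0 i)
    | .inr j => lcoeff ℚ (Finsupp.single 1 (j + 1)) +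
        if (j : ℕ) + 1 = d₂ then lcoeff ℚ (Finsupp.single 0 d₁) else 0

@[simp]
theorem wpCoords_inl (p : MvPolynomial (Fin 2) ℚ) (i : Fin d₁) :
    wpCoords d₁ d₂ p (.inl i) = coeff (Finsupp.single 0 i) p := rfl

@[simp]
theorem wpCoords_inr (p : MvPolynomial (Fin 2) ℚ) (j : Fin d₂) :
    wpCoords d₁ d₂ p (.inr j) = coeff (Finsupp.single 1 (j + 1)) p +
      if (j : ℕ) + 1 = d₂ then coeff (Finsupp.single 0 d₁) p else 0 := by
  simp only [wpCoords, LinearMap.pi_apply]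
  split_ifs <;> simp

theorem wpCoords_X_zero_mul (h₁ : 0 < d₁) {p : MvPolynomial (Fin 2) ℚ}
    (hp : wpCoords d₁ d₂ p = 0) : wpCoords d₁ d₂ (X 0 * p) = 0 := by
  replace hp (k) : wpCoords d₁ d₂ p k = 0 := congrFun hp k
  funext k
  rcases k with ⟨_ | i, hi⟩ | j
  · exact coeff_X_mul_of_apply_eq_zero (by simp) p
  · rw [wpCoords_inl, coeff_single_succ_X_mul]
    exact hp (.inl ⟨i, by omega⟩)
  · obtain ⟨n, rfl⟩ : ∃ n, d₁ = n + 1 := ⟨d₁ - 1, by omega⟩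
    rw [wpCoords_inr, coeff_X_mul_of_apply_eq_zero (by simp), zero_add, coeff_single_succ_X_mul]
    simp [show coeff (Finsupp.single 0 n) p = 0 from hp (.inl ⟨n, by omega⟩)]

theorem wpCoords_X_one_mul (h₁ : 0 < d₁) {p : MvPolynomial (Fin 2) ℚ}
    (hp : wpCoords d₁ d₂ p = 0) : wpCoords d₁ d₂ (X 1 * p) = 0 := by
  replace hp (k) : wpCoords d₁ d₂ p k = 0 := congrFun hp k
  funext k
  rcases k with i | ⟨_ | j, hj⟩
  · exact coeff_X_mul_of_apply_eq_zero (by simp) p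
  all_goals rw [wpCoords_inr, coeff_X_mul_of_apply_eq_zero (m := Finsupp.single 0 d₁) (by simp),
    coeff_single_succ_X_mul, ite_self, add_zero]
  · simpa using hp (.inl ⟨0, h₁⟩)
  · simpa [show j + 1 ≠ d₂ by omega] using hp (.inr ⟨j, by omega⟩)

theorem wpCoords_X_zero_pow_sub_X_one_pow (h₂ : 0 < d₂) :
    wpCoords d₁ d₂ (X 0 ^ d₁ - X 1 ^ d₂) = 0 := by
  funext k
  rcases k with ⟨i, hi⟩ | ⟨j, hj⟩ <;>
    simp only [wpCoords_inl, wpCoords_inr, coeff_sub, coeff_single_X_pow, Pi.zero_apply] <;>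
    grind

theorem wpCoords_X_zero_mul_X_one : wpCoords d₁ d₂ (X 0 * X 1) = 0 := by
  have hcoeff (i : Fin 2) (n : ℕ) :
      coeff (Finsupp.single i n) (X 0 * X 1 : MvPolynomial (Fin 2) ℚ) = 0 := by
    fin_cases i
    · rw [mul_comm]
      exact coeff_X_mul_of_apply_eq_zero (by simp) _
    · exact coeff_X_mul_of_apply_eq_zero (by simp) _
  funext k
  rcases k with i | j <;> simp [hcoeff]

theorem wpCoords_X_zero_pow_succ : wpCoords d₁ d₂ (X 0 ^ (d₁ + 1)) = 0 := by
  funext k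
  rcases k with ⟨i, hi⟩ | ⟨j, hj⟩ <;>
    simp only [wpCoords_inl, wpCoords_inr, coeff_single_X_pow, Pi.zero_apply] <;>
    grind

theorem wpIdeal_subset_ker_wpCoords (h₁ : 0 < d₁) (h₂ : 0 < d₂) :
    (wpIdeal d₁ d₂ : Set (MvPolynomial (Fin 2) ℚ)) ⊆ LinearMap.ker (wpCoords d₁ d₂) := by
  refine span_subset_of_forall_X_mul_mem ?_ fun i p hp => ?_
  · rintro _ (rfl | rfl | rfl)
    exacts [wpCoords_X_zero_pow_sub_X_one_pow h₂, wpCoords_X_zero_mul_X_one,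
      wpCoords_X_zero_pow_succ]
  · fin_cases i
    exacts [wpCoords_X_zero_mul h₁ hp, wpCoords_X_one_mul h₁ hp]

theorem wpCoords_wpBasisPoly (k : Fin d₁ ⊕ Fin d₂) :
    wpCoords d₁ d₂ (wpBasisPoly d₁ d₂ k) = Pi.single k 1 := by
  funext k'
  rcases k with ⟨i, hi⟩ | ⟨j, hj⟩ <;> rcases k' with ⟨i', hi'⟩ | ⟨j', hj'⟩ <;>
    simp only [wpBasisPoly, Sum.elim_inl, Sum.elim_inr, wpCoords_inl, wpCoords_inr,
      coeff_single_X_pow, Pi.single_apply] <;>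
    grind

theorem linearIndependent_mk_wpBasisPoly (h₁ : 0 < d₁) (h₂ : 0 < d₂) :
    LinearIndependent ℚ (Ideal.Quotient.mk (wpIdeal d₁ d₂) ∘ wpBasisPoly d₁ d₂) := by
  rw [Fintype.linearIndependent_iff]
  intro g hg k
  have hmem : ∑ k, g k • wpBasisPoly d₁ d₂ k ∈ wpIdeal d₁ d₂ := by
    rw [← Ideal.Quotient.eq_zero_iff_mem, ← hg, map_sum]
    rfl
  have hker : wpCoords d₁ d₂ (∑ k, g k • wpBasisPoly d₁ d₂ k) = 0 :=
    wpIdeal_subset_ker_wpCoords h₁ h₂ hmem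
  simpa [wpCoords_wpBasisPoly, Pi.single_apply, -Fintype.sum_sum_type] using congrFun hker k

end

theorem wp_orbifold_cohomology_basis_general (d₁ d₂ : ℕ) (h₁ : 0 < d₁) (h₂ : 0 < d₂) :
    (∃ b : Module.Basis (Fin d₁ ⊕ Fin d₂) ℚ (MvPolynomial (Fin 2) ℚ ⧸ wpIdeal d₁ d₂),
      (∀ i : Fin d₁, b (Sum.inl i) =
        Ideal.Quotient.mk (wpIdeal d₁ d₂) (MvPolynomial.X 0) ^ (i : ℕ)) ∧
      (∀ j : Fin d₂, b (Sum.inr j) =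
        Ideal.Quotient.mk (wpIdeal d₁ d₂) (MvPolynomial.X 1) ^ ((j : ℕ) + 1))) ∧
    Module.finrank ℚ (MvPolynomial (Fin 2) ℚ ⧸ wpIdeal d₁ d₂) = d₁ + d₂ := by
  let b := Module.Basis.mk (linearIndependent_mk_wpBasisPoly h₁ h₂)
    (top_le_span_range_mk_wpBasisPoly h₁)
  refine ⟨⟨b, fun i => ?_, fun j => ?_⟩, ?_⟩
  · simp [b, wpBasisPoly]
  · simp [b, wpBasisPoly]
  · rw [Module.finrank_eq_card_basis b, Fintype.card_sum, Fintype.card_fin, Fintype.card_fin]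

/-- For coprime d₁, d₂ ≥ 1, the ring
R = ℚ[α,β]/(α^{d₁} - β^{d₂}, αβ, α^{d₁+1}) has ℚ-basis
{1, α, ..., α^{d₁-1}, β, ..., β^{d₂-1}, α^{d₁} = β^{d₂}}, of dimension d₁ + d₂. -/
theorem wp_orbifold_cohomology_basis (d₁ d₂ : ℕ) (h₁ : 0 < d₁) (h₂ : 0 < d₂)
    (hco : Nat.Coprime d₁ d₂) :
    (∃ b : Module.Basis (Fin d₁ ⊕ Fin d₂) ℚ (MvPolynomial (Fin 2) ℚ ⧸ wpIdeal d₁ d₂),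
      (∀ i : Fin d₁, b (Sum.inl i) =
        Ideal.Quotient.mk (wpIdeal d₁ d₂) (MvPolynomial.X 0) ^ (i : ℕ)) ∧
      (∀ j : Fin d₂, b (Sum.inr j) =
        Ideal.Quotient.mk (wpIdeal d₁ d₂) (MvPolynomial.X 1) ^ ((j : ℕ) + 1))) ∧
    Module.finrank ℚ (MvPolynomial (Fin 2) ℚ ⧸ wpIdeal d₁ d₂) = d₁ + d₂ :=
  wp_orbifold_cohomology_basis_general d₁ d₂ h₁ h₂
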